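/- Let S be an invertible 2p×2p complex matrix whose entrywise complex conjugate satisfies S* = −S⁻¹, let λ ∈ ℂ with |λ| = 1, let Σ₂ denote the 2p×2p block-diagonal matrix consisting of p copies of σ₂, and suppose T := λ⁻¹(Σ₂ + λ²S*) is invertible. Then S = T*·Σ₂·T⁻¹ (where T* is the entrywise conjugate of T). -/

import Mathlib

open Matrix Complex

noncomputable def sigma2 : Matrix (Fin 2) (Fin 2) ℂ := !![0, -Complex.I; Complex.I, 0]

/-- Σ₂ : block diagonal direct sum of p copies of σ₂. -/
noncomputable def Sigma2p (p : ℕ) : Matrix (Fin 2 × Fin p) (Fin 2 × Fin p) ℂ :=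
  Matrix.blockDiagonal fun _ : Fin p => sigma2

/-!
Writing `M̄` for the entrywise conjugate, `S̄ = -S⁻¹` gives `S S̄ = -1`, and `|λ| = 1` gives
`λ̄ = λ⁻¹`, so `T̄ = λ (-Σ₂ + λ⁻² S)`. Using `Σ₂² = 1`, both `S T` and `T̄ Σ₂` expand to
`λ⁻¹ S Σ₂ - λ`; hence `S T = T̄ Σ₂`, and multiplying by `T⁻¹` on the right gives the claim.
-/

lemma sigma2_mul_self : sigma2 * sigma2 = 1 := by
  ext i j
  fin_cases i <;> fin_cases j <;> simp [sigma2]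

lemma sigma2_map_conj : sigma2.map (starRingEnd ℂ) = -sigma2 := by
  ext i j
  fin_cases i <;> fin_cases j <;> simp [sigma2]

lemma Sigma2p_mul_self (p : ℕ) : Sigma2p p * Sigma2p p = 1 := by
  rw [Sigma2p, ← blockDiagonal_mul, sigma2_mul_self]
  exact blockDiagonal_one

lemma Sigma2p_map_conj (p : ℕ) : (Sigma2p p).map (starRingEnd ℂ) = -Sigma2p p := by
  rw [Sigma2p, blockDiagonal_map _ _ (map_zero _), sigma2_map_conj]
  exact blockDiagonal_neg _

lemma map_conj_smul_add_smul {m n K : Type*} [CommSemiring K] [StarRing K]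
    (J S : Matrix m n K) (a b : K) :
    (a • (J + b • S.map (starRingEnd K))).map (starRingEnd K) =
      star a • (J.map (starRingEnd K) + star b • S) := by
  ext i j
  simp [starRingEnd_apply, mul_add]

lemma mul_eq_map_conj_mul_of_conj_structure {n K : Type*} [Fintype n] [DecidableEq n]
    [Field K] [StarRing K] {J S : Matrix n n K} {lam : K}
    (hJ : J.map (starRingEnd K) = -J) (hJJ : J * J = 1)
    (hS : S * S.map (starRingEnd K) = -1) (hlam : star lam = lam⁻¹) :
    S * (lam⁻¹ • (J + lam ^ 2 • S.map (starRingEnd K))) =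
      (lam⁻¹ • (J + lam ^ 2 • S.map (starRingEnd K))).map (starRingEnd K) * J := by
  rw [map_conj_smul_add_smul, hJ, star_pow, star_inv₀, hlam, inv_inv]
  rcases eq_or_ne lam 0 with rfl | hlam0
  · simp
  have hcoef₁ : lam⁻¹ * lam ^ 2 = lam := by field_simp
  have hcoef₂ : lam * lam⁻¹ ^ 2 = lam⁻¹ := by field_simp
  simp only [Matrix.mul_smul, Matrix.smul_mul, Matrix.mul_add, Matrix.add_mul, hS, hJJ,
    Matrix.neg_mul, smul_add, smul_smul, hcoef₁, hcoef₂, smul_neg]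
  abel

/-- if S is invertible with S* = −S⁻¹, |λ| = 1 and
T := λ⁻¹(Σ₂ + λ²S*) is invertible, then S = T* Σ₂ T⁻¹. -/
theorem S_eq_Tstar_Sigma2_Tinv (p : ℕ)
    (S : Matrix (Fin 2 × Fin p) (Fin 2 × Fin p) ℂ)
    (hS : IsUnit S)
    (hSstar : S.map (starRingEnd ℂ) = -S⁻¹)
    (lam : ℂ) (hlam : ‖lam‖ = 1)
    (T : Matrix (Fin 2 × Fin p) (Fin 2 × Fin p) ℂ)
    (hTdef : T = lam⁻¹ • (Sigma2p p + lam ^ 2 • S.map (starRingEnd ℂ)))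
    (hT : IsUnit T) :
    S = T.map (starRingEnd ℂ) * Sigma2p p * T⁻¹ := by
  have hSS : S * S.map (starRingEnd ℂ) = -1 := by
    rw [hSstar, mul_neg, mul_nonsing_inv S ((isUnit_iff_isUnit_det S).mp hS)]
  have hST : S * T = T.map (starRingEnd ℂ) * Sigma2p p := by
    rw [hTdef]
    exact mul_eq_map_conj_mul_of_conj_structure (Sigma2p_map_conj p) (Sigma2p_mul_self p) hSS
      (inv_eq_conj hlam).symm
  rw [← hST, mul_nonsing_inv_cancel_right _ _ ((isUnit_iff_isUnit_det T).mp hT)]
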